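/- Let m ≥ 1 and r ≥ 0 be integers and N := 2^{m+r}. For every function a : {0,1}^m × {0,1}^m → ℂ (not necessarily normalized), the following exact matrix identity holds: M(a) = ξ'(a) ⊗ (I_N/N) + (ξ(a) − ξ'(a)) ⊗ ((J_N − I_N)/(N(N−1))), where I_N and J_N are the identity and all-ones matrices with rows and columns indexed by {0,1}^{m+r}. -/

import Mathlib

open scoped BigOperators
open Kronecker Matrix

/-- Bit strings of length `m`. -/
abbrev BS (m : ℕ) := Fin m → Bool

/-- `y‖0^r` : the bit string `y` padded with `r` zeros, an element of `{0,1}^{m+r}`. -/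
def pad (m r : ℕ) (y : BS m) : BS (m + r) :=
  fun i => if h : (i : ℕ) < m then y ⟨i, h⟩ else false

/-- `ξ(a)_{x,x'} := (Σ_y a_{x,y}) · conj(Σ_y a_{x',y})`. -/
noncomputable def xi (m : ℕ) (a : BS m → BS m → ℂ) : Matrix (BS m) (BS m) ℂ :=
  Matrix.of fun x x' => (∑ y : BS m, a x y) * (starRingEnd ℂ) (∑ y : BS m, a x' y)

/-- `ξ'(a)_{x,x'} := Σ_y a_{x,y} · conj(a_{x',y})`. -/
noncomputable def xi' (m : ℕ) (a : BS m → BS m → ℂ) : Matrix (BS m) (BS m) ℂ :=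
  Matrix.of fun x x' => ∑ y : BS m, a x y * (starRingEnd ℂ) (a x' y)

/-- The all-ones matrix `J` indexed by `{0,1}^k`. -/
def Jmat (k : ℕ) : Matrix (BS k) (BS k) ℂ :=
  Matrix.of fun _ _ => 1

/-- The matrix
`M(a) := (1/N!)·Σ_{π ∈ S({0,1}^{m+r})} Σ_{x,x',y,y'} a_{x,y}·conj(a_{x',y'})·
  (E_{x,x'} ⊗ E_{π(y‖0^r),π(y'‖0^r)})` with `N = 2^{m+r}`. -/
noncomputable def Mmat (m r : ℕ) (a : BS m → BS m → ℂ) :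
    Matrix (BS m × BS (m + r)) (BS m × BS (m + r)) ℂ :=
  ((Nat.factorial (2 ^ (m + r)) : ℂ))⁻¹ •
    ∑ π : Equiv.Perm (BS (m + r)), ∑ x : BS m, ∑ x' : BS m, ∑ y : BS m, ∑ y' : BS m,
      (a x y * (starRingEnd ℂ) (a x' y')) •
        (Matrix.single x x' (1 : ℂ) ⊗ₖ
          Matrix.single (π (pad m r y)) (π (pad m r y')) (1 : ℂ))

/-!
Averaging the matrix unit `E_{π u, π v}` over all permutations `π` of an `N`-element set gives
`I / N` when `u = v` and `(J - I) / (N (N - 1))` when `u ≠ v`: exactly `(N - 1)!` permutations send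
`u ↦ s`, and for `u ≠ v`, `s ≠ t` exactly `(N - 2)!` send `(u, v) ↦ (s, t)`. Since `y ↦ y‖0^r`
is injective, `M(a)` is the sum over `x, x', y, y'` of `a_{x,y} conj(a_{x',y'}) E_{x,x'}` tensored
with one of these two matrices according to whether `y = y'`; the diagonal terms sum to `ξ'(a)`
and the off-diagonal ones to `ξ(a) - ξ'(a)`.
-/

section PermutationCounting

open Equiv Finset

variable {α : Type*} [Fintype α] [DecidableEq α]

lemma Equiv.Perm.card_fixing (S : Finset α) :
    Fintype.card {π : Perm α // ∀ a ∈ S, π a = a} = (Fintype.card α - #S).factorial := by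
  have e : {π : Perm α // ∀ a ∈ S, π a = a} ≃ Perm {a // a ∉ S} :=
    (Equiv.subtypeEquivRight fun π => by simp only [not_not]).trans
      (Perm.subtypeEquivSubtypePerm _).symm
  rw [Fintype.card_congr e, Fintype.card_perm, Fintype.card_subtype_compl, Fintype.card_coe]

lemma Equiv.Perm.card_agreeOn (σ : Perm α) (S : Finset α) :
    #{π : Perm α | ∀ a ∈ S, π a = σ a} = (Fintype.card α - #S).factorial := by
  rw [← Fintype.card_subtype, ← Perm.card_fixing S]
  exact Fintype.card_congr <| (Equiv.mulLeft σ⁻¹).subtypeEquiv fun π => by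
    simp [Equiv.symm_apply_eq]

lemma Equiv.Perm.card_apply_eq (u s : α) :
    #{π : Perm α | π u = s} = (Fintype.card α - 1).factorial := by
  simpa using Perm.card_agreeOn (swap u s) {u}

lemma Equiv.Perm.card_apply_eq_and_apply_eq {u v s t : α} (huv : u ≠ v) (hst : s ≠ t) :
    #{π : Perm α | π u = s ∧ π v = t} = (Fintype.card α - 2).factorial := by
  -- `swap u s` sends `u ↦ s`; the second swap moves `w` to `t` and fixes `s`.
  set w := swap u s v
  have hws : s ≠ w := fun h =>
    huv ((swap u s).injective (by rw [swap_apply_left]; exact h.symm)).symm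
  have := Perm.card_agreeOn (swap w t * swap u s) {u, v}
  simpa [Finset.card_pair huv, swap_apply_of_ne_of_ne hws hst, w] using this

lemma sum_perm_single_apply {R : Type*} [Semiring R] (u v s t : α) :
    (∑ π : Perm α, Matrix.single (π u) (π v) (1 : R)) s t = #{π : Perm α | π u = s ∧ π v = t} := by
  simp [Matrix.sum_apply, Matrix.single_apply, Finset.sum_boole]

end PermutationCounting

lemma Nat.cast_factorial_eq_mul_mul_factorial_sub_two {K : Type*} [Ring K] {n : ℕ} (hn : 2 ≤ n) :
    (n.factorial : K) = n * (n - 1) * (n - 2).factorial := by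
  rw [← Nat.mul_factorial_pred (by omega), ← Nat.mul_factorial_pred (n := n - 1) (by omega)]
  push_cast [Nat.cast_sub (by omega : 1 ≤ n), show n - 1 - 1 = n - 2 by omega]
  rw [mul_assoc]

section PermTwirl

open Equiv Finset

variable {α K : Type*} [Fintype α] [DecidableEq α] [Field K] [CharZero K]

noncomputable def permTwirl (u v : α) : Matrix α α K :=
  ((Fintype.card α).factorial : K)⁻¹ • ∑ π : Perm α, Matrix.single (π u) (π v) 1

lemma permTwirl_self (u : α) :
    permTwirl u u = (Fintype.card α : K)⁻¹ • (1 : Matrix α α K) := by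
  have hn : Fintype.card α ≠ 0 := (Fintype.card_pos_iff.mpr ⟨u⟩).ne'
  ext s t
  rw [permTwirl, Matrix.smul_apply, Matrix.smul_apply, sum_perm_single_apply, smul_eq_mul,
    smul_eq_mul]
  by_cases hst : s = t
  · subst hst
    simp only [Matrix.one_apply_eq, and_self]
    rw [Perm.card_apply_eq, ← Nat.mul_factorial_pred hn]
    have hfac := (Fintype.card α - 1).factorial_ne_zero
    push_cast
    field_simp
  · have : #{π : Perm α | π u = s ∧ π u = t} = 0 := by
      simp only [Finset.card_eq_zero, Finset.filter_eq_empty_iff]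
      exact fun π _ h => hst (h.1.symm.trans h.2)
    simp [this, hst]

lemma permTwirl_of_ne {u v : α} (huv : u ≠ v) :
    permTwirl u v = ((Fintype.card α : K) * (Fintype.card α - 1))⁻¹ •
      (Matrix.of (fun _ _ => 1) - 1 : Matrix α α K) := by
  have hn : 2 ≤ Fintype.card α := Fintype.one_lt_card_iff.mpr ⟨u, v, huv⟩
  ext s t
  rw [permTwirl, Matrix.smul_apply, Matrix.smul_apply, sum_perm_single_apply, smul_eq_mul,
    smul_eq_mul]
  by_cases hst : s = t
  · subst hst
    have : #{π : Perm α | π u = s ∧ π v = s} = 0 := by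
      simp only [Finset.card_eq_zero, Finset.filter_eq_empty_iff]
      exact fun π _ h => huv (π.injective (h.1.trans h.2.symm))
    simp [this]
  · rw [Perm.card_apply_eq_and_apply_eq huv hst, Nat.cast_factorial_eq_mul_mul_factorial_sub_two hn]
    have hfac := (Fintype.card α - 2).factorial_ne_zero
    simp only [Matrix.sub_apply, Matrix.of_apply, Matrix.one_apply_ne hst, sub_zero]
    field_simp

end PermTwirl

lemma pad_injective (m r : ℕ) : Function.Injective (pad m r) := by
  intro y y' h
  funext i
  simpa [pad] using congrFun h ⟨i, by omega⟩

lemma Mmat_eq_sum_kronecker_permTwirl (m r : ℕ) (a : BS m → BS m → ℂ) :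
    Mmat m r a = ∑ x : BS m, ∑ x' : BS m, ∑ y : BS m, ∑ y' : BS m,
      (a x y * (starRingEnd ℂ) (a x' y')) •
        (Matrix.single x x' (1 : ℂ) ⊗ₖ permTwirl (pad m r y) (pad m r y')) := by
  have hcard : Fintype.card (BS (m + r)) = 2 ^ (m + r) := by simp
  ext ⟨x, s⟩ ⟨x', t⟩
  simp only [Mmat, permTwirl, hcard, Matrix.smul_apply, Matrix.sum_apply,
    Matrix.kroneckerMap_apply, smul_eq_mul, Finset.mul_sum]
  rw [Finset.sum_comm]
  refine Finset.sum_congr rfl fun x₁ _ => ?_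
  rw [Finset.sum_comm]
  refine Finset.sum_congr rfl fun x₂ _ => ?_
  rw [Finset.sum_comm]
  refine Finset.sum_congr rfl fun y _ => ?_
  rw [Finset.sum_comm]
  refine Finset.sum_congr rfl fun y' _ => ?_
  refine Finset.sum_congr rfl fun π _ => ?_
  ring

section BlockSums

open Finset

variable {ι κ β R : Type*} [Fintype ι] [DecidableEq ι] [Fintype κ] [DecidableEq κ] [CommRing R]

lemma sum_sum_mul_ite_eq (c : κ → κ → R) (p q : R) :
    ∑ y, ∑ y', c y y' * (if y = y' then p else q)
      = (∑ y, c y y) * p + (∑ y, ∑ y', c y y' - ∑ y, c y y) * q := by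
  have split : ∀ y y', c y y' * (if y = y' then p else q)
      = c y y' * q + (if y = y' then c y y' * (p - q) else 0) := by
    intro y y'; split_ifs <;> ring
  simp only [split, sum_add_distrib, sum_ite_eq, mem_univ, if_true, ← sum_mul]
  ring

lemma sum_smul_single_kronecker_ite (c : ι → ι → κ → κ → R) (A B : Matrix β β R) :
    ∑ x, ∑ x', ∑ y, ∑ y', c x x' y y' •
        (Matrix.single x x' (1 : R) ⊗ₖ if y = y' then A else B)
      = Matrix.of (fun x x' => ∑ y, c x x' y y) ⊗ₖ A
        + Matrix.of (fun x x' => ∑ y, ∑ y', c x x' y y' - ∑ y, c x x' y y) ⊗ₖ B := by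
  ext ⟨x, s⟩ ⟨x', t⟩
  simp only [Matrix.sum_apply, Matrix.add_apply, Matrix.kroneckerMap_apply, Matrix.of_apply,
    Matrix.smul_apply, Matrix.single_apply, smul_eq_mul]
  rw [Fintype.sum_eq_single x (fun x₁ h => by simp [h]),
    Fintype.sum_eq_single x' (fun x₂ h => by simp [h])]
  simp only [and_self, if_true, one_mul, apply_ite (fun M : Matrix β β R => M s t)]
  exact sum_sum_mul_ite_eq _ _ _

end BlockSums

lemma xi_eq_of_sum_sum (m : ℕ) (a : BS m → BS m → ℂ) :
    xi m a = Matrix.of fun x x' => ∑ y, ∑ y', a x y * (starRingEnd ℂ) (a x' y') := by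
  ext x x'
  simp only [xi, Matrix.of_apply, map_sum, Finset.sum_mul_sum]

theorem statement3_general (m r : ℕ) (a : BS m → BS m → ℂ) :
    Mmat m r a =
      xi' m a ⊗ₖ (((2 : ℂ) ^ (m + r))⁻¹ • (1 : Matrix (BS (m + r)) (BS (m + r)) ℂ))
      + (xi m a - xi' m a) ⊗ₖ
          ((((2 : ℂ) ^ (m + r)) * ((2 : ℂ) ^ (m + r) - 1))⁻¹ •
            (Jmat (m + r) - 1)) := by
  have hcard : (Fintype.card (BS (m + r)) : ℂ) = 2 ^ (m + r) := by simp
  have htwirl : ∀ y y' : BS m, permTwirl (pad m r y) (pad m r y') =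
      if y = y' then ((2 : ℂ) ^ (m + r))⁻¹ • (1 : Matrix (BS (m + r)) (BS (m + r)) ℂ)
      else (((2 : ℂ) ^ (m + r)) * ((2 : ℂ) ^ (m + r) - 1))⁻¹ • (Jmat (m + r) - 1) := by
    intro y y'
    split_ifs with h
    · rw [h, permTwirl_self, hcard]
    · rw [permTwirl_of_ne ((pad_injective m r).ne h), hcard, Jmat]
  simp_rw [Mmat_eq_sum_kronecker_permTwirl, htwirl]
  rw [sum_smul_single_kronecker_ite, xi_eq_of_sum_sum, xi', Matrix.of_sub_of]
  rfl

/-- The exact decomposition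
`M(a) = ξ'(a) ⊗ (I_N/N) + (ξ(a) − ξ'(a)) ⊗ ((J_N − I_N)/(N(N−1)))`. -/
theorem statement3 (m r : ℕ) (hm : 1 ≤ m) (a : BS m → BS m → ℂ) :
    Mmat m r a =
      xi' m a ⊗ₖ (((2 : ℂ) ^ (m + r))⁻¹ • (1 : Matrix (BS (m + r)) (BS (m + r)) ℂ))
      + (xi m a - xi' m a) ⊗ₖ
          ((((2 : ℂ) ^ (m + r)) * ((2 : ℂ) ^ (m + r) - 1))⁻¹ •
            (Jmat (m + r) - 1)) :=
  statement3_general m r a
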